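/- The parameter map (ε, r, α, s) ↦ H^{ε,r}_{α,s} is injective: if H^{ε,r}_{α,s} = H^{ε',r'}_{α',s'} as germs at 0 (equivalently, if all their Taylor coefficients at 0 agree), then ε = ε', r = r', α = α', s = s'. Moreover ε, r, α are already determined by the 2-jet, while s requires the 3-jet. -/

import Mathlib

open Complex

/-- `θ_{α,s}(z,w) = (1 - 2i conj(α) z w - (s + i|α|²) w²)^{1/2}`, principal branch. -/
noncomputable def theta (α : ℂ) (s : ℝ) (p : ℂ × ℂ) : ℂ :=
  (1 - 2 * I * (starRingEnd ℂ) α * p.1 * p.2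
    - ((s : ℂ) + I * (‖α‖ : ℂ) ^ 2) * p.2 ^ 2) ^ ((1 : ℂ) / 2)

/-- `H^{ε,r}_{α,s}(z,w) = (ε(z + αw)/θ_{α,s}(z,w), r w/θ_{α,s}(z,w))`. -/
noncomputable def Hmap (ε : ℂ) (r : ℝ) (α : ℂ) (s : ℝ) (p : ℂ × ℂ) : ℂ × ℂ :=
  (ε * (p.1 + α * p.2) / theta α s p, (r : ℂ) * p.2 / theta α s p)

set_option maxHeartbeats 1000000
set_option synthInstance.maxHeartbeats 400000

/-! ### Auxiliary material -/

/-- The base of the square root in `theta`. -/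
noncomputable def uu (α : ℂ) (s : ℝ) (p : ℂ × ℂ) : ℂ :=
  1 - 2 * I * (starRingEnd ℂ) α * p.1 * p.2 - ((s : ℂ) + I * (‖α‖ : ℂ) ^ 2) * p.2 ^ 2

lemma theta_eq (α : ℂ) (s : ℝ) : theta α s = fun p => uu α s p ^ ((1:ℂ)/2) := rfl

@[simp] lemma uu_zero (α : ℂ) (s : ℝ) : uu α s 0 = 1 := by simp [uu]

@[simp] lemma theta_zero (α : ℂ) (s : ℝ) : theta α s 0 = 1 := by
  rw [theta_eq]; simp [Complex.one_cpow]

/-- The derivative of `Hmap` at `0`. -/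
noncomputable def Lmap (ε : ℂ) (r : ℝ) (α : ℂ) : (ℂ × ℂ) →L[ℂ] (ℂ × ℂ) :=
  (ε • ((ContinuousLinearMap.fst ℂ ℂ ℂ) + α • (ContinuousLinearMap.snd ℂ ℂ ℂ))).prod
    ((r : ℂ) • (ContinuousLinearMap.snd ℂ ℂ ℂ))

lemma hasFDerivAt_uu (α : ℂ) (s : ℝ) :
    HasFDerivAt (uu α s) (0 : (ℂ × ℂ) →L[ℂ] ℂ) 0 := by
  have hA : HasFDerivAt (fun p : ℂ × ℂ => 2 * I * (starRingEnd ℂ) α * p.1 * p.2)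
      (0 : (ℂ × ℂ) →L[ℂ] ℂ) 0 := by
    have h := ((hasFDerivAt_fst (𝕜 := ℂ) (p := (0 : ℂ × ℂ))).const_mul
      (2 * I * (starRingEnd ℂ) α)).mul (hasFDerivAt_snd (𝕜 := ℂ) (p := (0 : ℂ × ℂ)))
    refine h.congr_fderiv (ContinuousLinearMap.ext fun q => ?_)
    simp
  have hB : HasFDerivAt (fun p : ℂ × ℂ => ((s : ℂ) + I * (‖α‖ : ℂ) ^ 2) * p.2 ^ 2)
      (0 : (ℂ × ℂ) →L[ℂ] ℂ) 0 := by
    have h2 := (hasFDerivAt_snd (𝕜 := ℂ) (p := (0 : ℂ × ℂ))).mul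
      (hasFDerivAt_snd (𝕜 := ℂ) (p := (0 : ℂ × ℂ)))
    have h := h2.const_mul ((s : ℂ) + I * (‖α‖ : ℂ) ^ 2)
    have h' := h.congr_fderiv (g' := 0) (ContinuousLinearMap.ext fun q => by simp)
    simpa [pow_two] using h'
  have h := ((hasFDerivAt_const (1:ℂ) (0 : ℂ × ℂ)).sub hA).sub hB
  refine h.congr_fderiv (ContinuousLinearMap.ext fun q => ?_)
  simp

lemma hasFDerivAt_theta (α : ℂ) (s : ℝ) :
    HasFDerivAt (theta α s) (0 : (ℂ × ℂ) →L[ℂ] ℂ) 0 := by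
  rw [theta_eq]
  have h := (hasFDerivAt_uu α s).cpow (hasFDerivAt_const ((1:ℂ)/2) (0 : ℂ × ℂ))
    (by rw [uu_zero]; exact Complex.one_mem_slitPlane)
  refine h.congr_fderiv (ContinuousLinearMap.ext fun q => ?_)
  simp [ContinuousLinearMap.smul_apply, ContinuousLinearMap.add_apply,
    ContinuousLinearMap.zero_apply]

lemma hasFDerivAt_theta_inv (α : ℂ) (s : ℝ) :
    HasFDerivAt (fun p => (theta α s p)⁻¹) (0 : (ℂ × ℂ) →L[ℂ] ℂ) 0 := by
  have hne : theta α s 0 ≠ 0 := by rw [theta_zero]; exact one_ne_zero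
  have hinv := hasFDerivAt_inv' (𝕜 := ℂ) (x := theta α s 0) hne
  have h := hinv.comp (0 : ℂ × ℂ) (hasFDerivAt_theta α s)
  refine h.congr_fderiv (ContinuousLinearMap.ext fun q => ?_)
  simp

lemma hasFDerivAt_Hmap (ε : ℂ) (r : ℝ) (α : ℂ) (s : ℝ) :
    HasFDerivAt (Hmap ε r α s) (Lmap ε r α) 0 := by
  have hθi := hasFDerivAt_theta_inv α s
  have hθi0 : (theta α s 0)⁻¹ = 1 := by rw [theta_zero]; exact inv_one
  have hN1 : HasFDerivAt (fun p : ℂ × ℂ => ε * (p.1 + α * p.2))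
      (ε • ((ContinuousLinearMap.fst ℂ ℂ ℂ) + α • (ContinuousLinearMap.snd ℂ ℂ ℂ))) 0 := by
    have h := ((hasFDerivAt_fst (𝕜 := ℂ) (p := (0 : ℂ × ℂ))).add
      ((hasFDerivAt_snd (𝕜 := ℂ) (p := (0 : ℂ × ℂ))).const_mul α)).const_mul ε
    exact h
  have hN2 : HasFDerivAt (fun p : ℂ × ℂ => (r : ℂ) * p.2)
      ((r : ℂ) • (ContinuousLinearMap.snd ℂ ℂ ℂ)) 0 :=
    (hasFDerivAt_snd (𝕜 := ℂ) (p := (0 : ℂ × ℂ))).const_mul (r : ℂ)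
  have h1 := hN1.mul hθi
  have h2 := hN2.mul hθi
  have h := HasFDerivAt.prodMk h1 h2
  have hfun : Hmap ε r α s = fun p : ℂ × ℂ =>
      (ε * (p.1 + α * p.2) * (theta α s p)⁻¹, (r : ℂ) * p.2 * (theta α s p)⁻¹) := by
    funext p
    simp [Hmap, div_eq_mul_inv]
  rw [hfun]
  refine h.congr_fderiv (ContinuousLinearMap.ext fun q => ?_)
  simp [Lmap, hθi0]

lemma fderiv_Hmap (ε : ℂ) (r : ℝ) (α : ℂ) (s : ℝ) :
    fderiv ℂ (Hmap ε r α s) 0 = Lmap ε r α := (hasFDerivAt_Hmap ε r α s).fderiv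

lemma contDiffOn_Hmap (ε : ℂ) (r : ℝ) (α : ℂ) (s : ℝ) :
    ContDiffOn ℂ 3 (Hmap ε r α s) (uu α s ⁻¹' Complex.slitPlane) := by
  intro p hp
  have hu_an : AnalyticAt ℂ (uu α s) p := by
    unfold uu
    exact (analyticAt_const.sub ((analyticAt_const.mul analyticAt_fst).mul analyticAt_snd)).sub
      (analyticAt_const.mul (analyticAt_snd.pow 2))
  have hθ_an : AnalyticAt ℂ (theta α s) p := by
    rw [theta_eq]
    exact hu_an.cpow analyticAt_const hp
  have hθ_ne : theta α s p ≠ 0 := by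
    rw [theta_eq]
    intro h
    rcases (Complex.cpow_eq_zero_iff _ _).mp h with ⟨h0, -⟩
    exact Complex.slitPlane_ne_zero hp h0
  have hH : AnalyticAt ℂ (Hmap ε r α s) p := by
    apply AnalyticAt.prod
    · exact (analyticAt_const.mul (analyticAt_fst.add (analyticAt_const.mul analyticAt_snd))).div
        hθ_an hθ_ne
    · exact (analyticAt_const.mul analyticAt_snd).div hθ_an hθ_ne
  exact hH.contDiffAt.contDiffWithinAt

lemma continuous_uu (α : ℂ) (s : ℝ) : Continuous (uu α s) := by
  unfold uu; fun_prop

lemma bridge (ε : ℂ) (r : ℝ) (α : ℂ) (s : ℝ) :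
    iteratedDeriv 3 (fun w : ℂ => (Hmap ε r α s (0, w)).2) 0
      = ((iteratedFDeriv ℂ 3 (Hmap ε r α s) 0) fun _ => ((0:ℂ), (1:ℂ))).2 := by
  set S : Set (ℂ × ℂ) := uu α s ⁻¹' Complex.slitPlane with hS
  have hSo : IsOpen S := Complex.isOpen_slitPlane.preimage (continuous_uu α s)
  have hS0 : (0 : ℂ × ℂ) ∈ S := by
    simp only [hS, Set.mem_preimage, uu_zero]
    exact Complex.one_mem_slitPlane
  set g : ℂ →L[ℂ] ℂ × ℂ := ContinuousLinearMap.inr ℂ ℂ ℂ with hg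
  set sndL : (ℂ × ℂ) →L[ℂ] ℂ := ContinuousLinearMap.snd ℂ ℂ ℂ with hsnd
  have hcd := contDiffOn_Hmap ε r α s
  have hcomp : ContDiffOn ℂ 3 (⇑sndL ∘ Hmap ε r α s) S := hcd.continuousLinearMap_comp sndL
  have hT : IsOpen (⇑g ⁻¹' S) := hSo.preimage g.continuous
  have hg0 : g 0 ∈ S := by simpa using hS0
  have hT0 : (0:ℂ) ∈ ⇑g ⁻¹' S := by simpa using hg0
  have h3le : ((3:ℕ) : WithTop ℕ∞) ≤ 3 := by exact_mod_cast le_rfl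
  have step1 := g.iteratedFDerivWithin_comp_right hcomp hSo.uniqueDiffOn hT.uniqueDiffOn
    (x := (0:ℂ)) hg0 h3le
  have step2 := sndL.iteratedFDerivWithin_comp_left (hcd 0 hS0) hSo.uniqueDiffOn hS0 h3le
  have hfun : (fun w : ℂ => (Hmap ε r α s (0, w)).2) = (⇑sndL ∘ Hmap ε r α s) ∘ ⇑g := by
    funext w
    simp [hsnd, hg, Function.comp]
  rw [hfun, iteratedDeriv_eq_iteratedFDeriv]
  rw [← iteratedFDerivWithin_of_isOpen 3 hT hT0]
  rw [step1]
  rw [show g 0 = (0 : ℂ × ℂ) from map_zero g]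
  rw [iteratedFDerivWithin_of_isOpen 3 hSo hS0] at step2
  rw [iteratedFDerivWithin_of_isOpen 3 hSo hS0] at step2
  rw [iteratedFDerivWithin_of_isOpen 3 hSo hS0, step2]
  simp [ContinuousMultilinearMap.compContinuousLinearMap_apply,
    ContinuousLinearMap.compContinuousMultilinearMap_coe, hsnd, hg]

lemma psi3 (r : ℝ) (c : ℂ) :
    iteratedDeriv 3 (fun w : ℂ => (r : ℂ) * w / (1 - c * w ^ 2) ^ ((1:ℂ)/2)) 0 = 3 * r * c := by
  set v : ℂ → ℂ := fun w => 1 - c * w ^ 2 with hv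
  have hψ : (fun w : ℂ => (r : ℂ) * w / (1 - c * w ^ 2) ^ ((1:ℂ)/2))
      = fun w => (r : ℂ) * w * v w ^ (-(1/2) : ℂ) := by
    funext w
    rw [div_eq_mul_inv, show (-(1/2) : ℂ) = -((1:ℂ)/2) by norm_num, Complex.cpow_neg]
  have hvd : ∀ w : ℂ, HasDerivAt v (-(2 * c * w)) w := by
    intro w
    have h := ((hasDerivAt_pow 2 w).const_mul c).const_sub 1
    refine h.congr_deriv ?_
    ring
  set U : Set ℂ := v ⁻¹' Complex.slitPlane with hU
  have hUopen : IsOpen U := Complex.isOpen_slitPlane.preimage (by fun_prop)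
  have hU0 : (0:ℂ) ∈ U := by
    simp only [hU, Set.mem_preimage, hv]
    norm_num
  set D1 : ℂ → ℂ := fun w => (r:ℂ) * v w ^ (-(1/2):ℂ) + (r:ℂ)*c*w^2 * v w ^ (-(3/2):ℂ) with hD1
  set D2 : ℂ → ℂ := fun w => 3*(r:ℂ)*c*w * v w ^ (-(3/2):ℂ) + 3*(r:ℂ)*c^2*w^3 * v w ^ (-(5/2):ℂ) with hD2
  set D3 : ℂ → ℂ := fun w => 3*(r:ℂ)*c* v w ^ (-(3/2):ℂ) + 18*(r:ℂ)*c^2*w^2 * v w ^ (-(5/2):ℂ)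
    + 15*(r:ℂ)*c^3*w^4 * v w ^ (-(7/2):ℂ) with hD3
  have h1 : ∀ w ∈ U, HasDerivAt (fun w => (r:ℂ) * w * v w ^ (-(1/2) : ℂ)) (D1 w) w := by
    intro w hw
    have hc1 : HasDerivAt (fun w => v w ^ (-(1/2):ℂ))
        ((-(1/2):ℂ) * v w ^ ((-(1/2):ℂ) - 1) * (-(2 * c * w))) w := (hvd w).cpow_const hw
    have h := (HasDerivAt.const_mul (r:ℂ) (hasDerivAt_id w)).mul hc1
    refine h.congr_deriv ?_
    rw [hD1, show ((-(1/2):ℂ) - 1) = (-(3/2):ℂ) by norm_num]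
    simp only [id_eq]
    ring
  have h2 : ∀ w ∈ U, HasDerivAt D1 (D2 w) w := by
    intro w hw
    have hc1 : HasDerivAt (fun w => v w ^ (-(1/2):ℂ))
        ((-(1/2):ℂ) * v w ^ ((-(1/2):ℂ) - 1) * (-(2 * c * w))) w := (hvd w).cpow_const hw
    have hc2 : HasDerivAt (fun w => v w ^ (-(3/2):ℂ))
        ((-(3/2):ℂ) * v w ^ ((-(3/2):ℂ) - 1) * (-(2 * c * w))) w := (hvd w).cpow_const hw
    have h := (hc1.const_mul (r:ℂ)).add
      (((hasDerivAt_pow 2 w).const_mul ((r:ℂ)*c)).mul hc2)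
    refine h.congr_deriv ?_
    rw [hD2, show ((-(1/2):ℂ) - 1) = (-(3/2):ℂ) by norm_num,
      show ((-(3/2):ℂ) - 1) = (-(5/2):ℂ) by norm_num]
    ring
  have h3 : ∀ w ∈ U, HasDerivAt D2 (D3 w) w := by
    intro w hw
    have hc2 : HasDerivAt (fun w => v w ^ (-(3/2):ℂ))
        ((-(3/2):ℂ) * v w ^ ((-(3/2):ℂ) - 1) * (-(2 * c * w))) w := (hvd w).cpow_const hw
    have hc3 : HasDerivAt (fun w => v w ^ (-(5/2):ℂ))
        ((-(5/2):ℂ) * v w ^ ((-(5/2):ℂ) - 1) * (-(2 * c * w))) w := (hvd w).cpow_const hw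
    have h := ((HasDerivAt.const_mul (3*(r:ℂ)*c) (hasDerivAt_id w)).mul hc2).add
      (((hasDerivAt_pow 3 w).const_mul (3*(r:ℂ)*c^2)).mul hc3)
    refine h.congr_deriv ?_
    rw [hD3, show ((-(3/2):ℂ) - 1) = (-(5/2):ℂ) by norm_num,
      show ((-(5/2):ℂ) - 1) = (-(7/2):ℂ) by norm_num]
    simp only [id_eq]
    ring
  rw [hψ]
  have hUnhds : U ∈ nhds (0:ℂ) := hUopen.mem_nhds hU0
  have e1 : deriv (fun w => (r:ℂ) * w * v w ^ (-(1/2) : ℂ)) =ᶠ[nhds (0:ℂ)] D1 := by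
    filter_upwards [hUnhds] with w hw
    exact (h1 w hw).deriv
  have e2 : deriv D1 =ᶠ[nhds (0:ℂ)] D2 := by
    filter_upwards [hUnhds] with w hw
    exact (h2 w hw).deriv
  have e3 : deriv (deriv (deriv (fun w => (r:ℂ) * w * v w ^ (-(1/2) : ℂ)))) 0 = deriv D2 0 :=
    ((e1.deriv.trans e2).deriv).eq_of_nhds
  have e4 : deriv D2 0 = D3 0 := (h3 0 hU0).deriv
  have e5 : D3 0 = 3 * r * c := by
    simp only [hD3, hv]
    norm_num
  show iteratedDeriv 3 _ 0 = _
  rw [show (3:ℕ) = 2 + 1 from rfl, iteratedDeriv_succ, iteratedDeriv_succ, iteratedDeriv_succ,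
    iteratedDeriv_zero]
  rw [e3, e4, e5]

lemma psi_fun_eq (ε : ℂ) (r : ℝ) (α : ℂ) (s : ℝ) :
    (fun w : ℂ => (Hmap ε r α s (0, w)).2)
      = fun w : ℂ => (r : ℂ) * w / (1 - ((s:ℂ) + I * (‖α‖ : ℂ) ^ 2) * w ^ 2) ^ ((1:ℂ)/2) := by
  funext w
  show (r : ℂ) * w / theta α s (0, w) = _
  congr 1
  unfold theta
  norm_num

lemma jet3_eval (ε : ℂ) (r : ℝ) (α : ℂ) (s : ℝ) :
    ((iteratedFDeriv ℂ 3 (Hmap ε r α s) 0) fun _ => ((0:ℂ), (1:ℂ))).2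
      = 3 * r * ((s:ℂ) + I * (‖α‖ : ℂ) ^ 2) := by
  rw [← bridge, psi_fun_eq]
  exact psi3 r _

theorem stmt_13 (ε ε' : ℂ) (hε : ‖ε‖ = 1) (hε' : ‖ε'‖ = 1)
    (r r' : ℝ) (hr : r ≠ 0) (hr' : r' ≠ 0) (α α' : ℂ) (s s' : ℝ) :
    ((Hmap ε r α s =ᶠ[nhds (0 : ℂ × ℂ)] Hmap ε' r' α' s') →
        ε = ε' ∧ r = r' ∧ α = α' ∧ s = s') ∧
    ((∀ n : ℕ, n ≤ 2 →
        iteratedFDeriv ℂ n (Hmap ε r α s) 0 = iteratedFDeriv ℂ n (Hmap ε' r' α' s') 0) →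
        ε = ε' ∧ r = r' ∧ α = α') ∧
    ((∀ n : ℕ, n ≤ 3 →
        iteratedFDeriv ℂ n (Hmap ε r α s) 0 = iteratedFDeriv ℂ n (Hmap ε' r' α' s') 0) →
        ε = ε' ∧ r = r' ∧ α = α' ∧ s = s') := by
  have hεne : ε ≠ 0 := by
    intro h; rw [h] at hε; simp at hε
  -- first-order extraction
  have core1 : (iteratedFDeriv ℂ 1 (Hmap ε r α s) 0 = iteratedFDeriv ℂ 1 (Hmap ε' r' α' s') 0) →
      ε = ε' ∧ r = r' ∧ α = α' := by
    intro h1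
    have hv : ∀ v : ℂ × ℂ, Lmap ε r α v = Lmap ε' r' α' v := by
      intro v
      have h := congrArg (fun T : ContinuousMultilinearMap ℂ (fun _ : Fin 1 => ℂ × ℂ) (ℂ × ℂ) =>
        T ![v]) h1
      simp only [iteratedFDeriv_one_apply] at h
      rw [fderiv_Hmap, fderiv_Hmap] at h
      simpa using h
    have h10 := hv (1, 0)
    have h01 := hv (0, 1)
    simp only [Lmap, ContinuousLinearMap.prod_apply, ContinuousLinearMap.smul_apply,
      ContinuousLinearMap.add_apply, ContinuousLinearMap.coe_fst', ContinuousLinearMap.coe_snd',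
      Prod.mk.injEq, smul_eq_mul] at h10 h01
    have hee : ε = ε' := by
      have := h10.1
      simpa using this
    have hrr : r = r' := by
      have h2 := h01.2
      have : (r : ℂ) = (r' : ℂ) := by simpa using h2
      exact_mod_cast this
    have haa : α = α' := by
      have h2 := h01.1
      rw [hee] at h2
      simp only [zero_add, mul_one] at h2
      have hε'ne : ε' ≠ 0 := by
        intro h0; rw [h0] at hε'; simp at hε'
      exact mul_left_cancel₀ hε'ne h2
    exact ⟨hee, hrr, haa⟩
  have core3 : (iteratedFDeriv ℂ 3 (Hmap ε r α s) 0 = iteratedFDeriv ℂ 3 (Hmap ε' r' α' s') 0) →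
      r = r' → α = α' → s = s' := by
    intro h3 hrr haa
    have hv := congrArg (fun T : ContinuousMultilinearMap ℂ (fun _ : Fin 3 => ℂ × ℂ) (ℂ × ℂ) =>
      (T fun _ => ((0:ℂ), (1:ℂ))).2) h3
    rw [jet3_eval, jet3_eval] at hv
    rw [← hrr, ← haa] at hv
    have h3r : (3:ℂ) * (r:ℂ) ≠ 0 := by
      simp [hr]
    have hcc := mul_left_cancel₀ h3r hv
    have : (s : ℂ) = (s' : ℂ) := add_right_cancel hcc
    exact_mod_cast this
  have part3 : (∀ n : ℕ, n ≤ 3 →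
      iteratedFDeriv ℂ n (Hmap ε r α s) 0 = iteratedFDeriv ℂ n (Hmap ε' r' α' s') 0) →
      ε = ε' ∧ r = r' ∧ α = α' ∧ s = s' := by
    intro h
    obtain ⟨hee, hrr, haa⟩ := core1 (h 1 (by norm_num))
    exact ⟨hee, hrr, haa, core3 (h 3 le_rfl) hrr haa⟩
  refine ⟨?_, fun h2 => core1 (h2 1 (by norm_num)), part3⟩
  intro h
  have hjet : ∀ n : ℕ, iteratedFDeriv ℂ n (Hmap ε r α s) 0
      = iteratedFDeriv ℂ n (Hmap ε' r' α' s') 0 := by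
    intro n
    rw [← iteratedFDerivWithin_univ, ← iteratedFDerivWithin_univ]
    refine Filter.EventuallyEq.iteratedFDerivWithin_eq ?_ ?_ n
    · rwa [nhdsWithin_univ]
    · exact h.self_of_nhds
  exact part3 fun n _ => hjet n
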